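/- arXiv:2603.17862 — 3 statements merged into one kernel-verified Lean document; each statement's English description precedes it below -/
import Mathlib

section
/- If (x, p, α) is a d-dimensional lexicographic dividend equilibrium for the economy (u, ω) satisfying the strong cheapest bundle property, then for every N ≥ 1 the allocation x belongs to RC(u, ω, N); that is, LDE₊(u, ω) ⊆ ⋂_{N=1}^∞ RC(u, ω, N). -/
open Finset

/-- Dot product of two vectors in `ℝⁿ`. -/
def dotp {n : ℕ} (a b : Fin n → ℝ) : ℝ := ∑ j, a j * b j

/-- Membership in `Δⁿ₋`: nonnegative with coordinate sum at most 1. -/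
def InSimplexLe {n : ℕ} (y : Fin n → ℝ) : Prop := (∀ j, 0 ≤ y j) ∧ ∑ j, y j ≤ 1

/-- The set `M` of allocations: nonnegative doubly stochastic matrices. -/
def IsAlloc {n : ℕ} (x : Fin n → Fin n → ℝ) : Prop :=
  (∀ i j, 0 ≤ x i j) ∧ (∀ i, ∑ j, x i j = 1) ∧ (∀ j, ∑ i, x i j = 1)

/-- `k_i` (0-based): the first currency in which agent `i` has positive income,
or the last currency `d - 1` if there is none. -/
noncomputable def kIdx {n : ℕ} (d : ℕ) (p α : ℕ → Fin n → ℝ)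
    (ω : Fin n → Fin n → ℝ) (i : Fin n) : ℕ :=
  sInf ({k | k < d ∧ 0 < dotp (p k) (ω i) + α k i} ∪ {d - 1})

/-- The budget set `C^α_i(p)`. -/
def BudgetSet {n : ℕ} (d : ℕ) (p α : ℕ → Fin n → ℝ)
    (ω : Fin n → Fin n → ℝ) (i : Fin n) : Set (Fin n → ℝ) :=
  {y | InSimplexLe y ∧
    ∀ k ≤ kIdx d p α ω i, dotp (p k) y ≤ dotp (p k) (ω i) + α k i}

/-- `(x, p, α)` is a `d`-dimensional lexicographic dividend equilibrium for `(u, ω)`.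
Currencies are indexed 0-based by `k < d`. -/
def IsLDE {n : ℕ} (u ω : Fin n → Fin n → ℝ) (d : ℕ)
    (x : Fin n → Fin n → ℝ) (p α : ℕ → Fin n → ℝ) : Prop :=
  IsAlloc x ∧
  (∀ k, k < d → ∀ i, 0 ≤ α k i) ∧
  (∀ (j : Fin n) (k : ℕ), k < d → p k j ≠ 0 → (∀ l < k, p l j = 0) → 0 < p k j) ∧
  (∀ (i : Fin n) (k : ℕ), k < d →
    α k i = max (dotp (p k) (fun j => x i j - ω i j)) 0) ∧
  (∀ (i : Fin n), ∀ y ∈ BudgetSet d p α ω i, dotp (u i) y ≤ dotp (u i) (x i))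

/-- The strong cheapest bundle property. -/
def StrongCB {n : ℕ} (u : Fin n → Fin n → ℝ) (d : ℕ)
    (x : Fin n → Fin n → ℝ) (p : ℕ → Fin n → ℝ) : Prop :=
  ¬ ∃ (i : Fin n) (y : Fin n → ℝ) (k : ℕ),
      InSimplexLe y ∧ dotp (u i) (x i) ≤ dotp (u i) y ∧ k < d ∧
      (∀ l < k, dotp (p l) y = dotp (p l) (x i)) ∧
      dotp (p k) y < dotp (p k) (x i)

/-- A nonempty coalition of the `N`-fold replica economy rejects the replica allocation
induced by `x` (agent `(m, i)` has utilities `u i`, endowment `ω i`, allocation `x i`). -/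
def RejectsReplica {n : ℕ} (N : ℕ) (u ω x : Fin n → Fin n → ℝ) : Prop :=
  ∃ (C1 C2 : Finset (Fin N × Fin n)) (y : Fin N × Fin n → Fin n → ℝ),
    Disjoint C1 C2 ∧ (C1 ∪ C2).Nonempty ∧
    (∀ a ∈ C1 ∪ C2, InSimplexLe (y a)) ∧
    (∀ j, ∑ a ∈ C1 ∪ C2, y a j ≤ ∑ a ∈ C1, ω a.2 j + ∑ a ∈ C2, x a.2 j) ∧
    (∀ a ∈ C1, dotp (u a.2) (x a.2) < dotp (u a.2) (y a)) ∧
    (∀ a ∈ C2, dotp (u a.2) (x a.2) ≤ dotp (u a.2) (y a)) ∧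
    (C1 = ∅ → ∃ a ∈ C2, dotp (u a.2) (x a.2) < dotp (u a.2) (y a))

/-
Value bundles by their vector of prices in the `d` currencies, ordered lexicographically. The
first nonzero entry of every price column is positive, so this is a monotone additive map. In
the equilibrium, a bundle that agent `i` weakly prefers to `x i` is lexicographically at least as
dear as `x i` (strong cheapest bundle property). A strictly preferred bundle violates the budget
in some currency `k ≤ kᵢ`; since the income `p⁽ᵏ⁾ · ωᵢ + αᵢ⁽ᵏ⁾ = max (p⁽ᵏ⁾ · xᵢ) (p⁽ᵏ⁾ · ωᵢ)` is
lexicographically nonnegative and nonpositive before `kᵢ`, both `xᵢ` and `ωᵢ` are worth `0` there,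
and the bundle is strictly dearer than both. Summed over a rejecting coalition, the bundles are
then strictly dearer than what the coalition holds, contradicting feasibility.
-/

section LexOrder

variable {ι : Type*} [LinearOrder ι]

theorem toLex_smul_nonneg {R : Type*} [Semiring R] [PartialOrder R] [IsStrictOrderedRing R]
    {v : ι → R} (hv : 0 ≤ toLex v) {c : R} (hc : 0 ≤ c) : 0 ≤ toLex (c • v) := by
  rcases hc.eq_or_lt with rfl | hc
  · simp
  rcases hv.lt_or_eq with ⟨i, hzero, hpos⟩ | hv
  · refine le_of_lt ⟨i, fun j hj => ?_, ?_⟩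
    · change (0 : R) = c * v j
      rw [← show (0 : R) = v j from hzero j hj, mul_zero]
    · exact mul_pos hc hpos
  · simp [← hv]

theorem eq_zero_of_toLex_nonneg_of_nonpos [WellFoundedLT ι] {β : Type*} [Zero β] [LinearOrder β]
    {v : ι → β} (hv : 0 ≤ toLex v) {i : ι} (hnonpos : ∀ j < i, v j ≤ 0) :
    ∀ j < i, v j = 0 := by
  intro j
  induction j using WellFoundedLT.induction with
  | _ j ih =>
    intro hj
    have : (0 : ι → β) j ≤ v j :=
      Pi.apply_le_of_toLex hv fun l hl => (ih l hl (hl.trans hj)).symm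
    exact le_antisymm (hnonpos j hj) this

theorem toLex_lt_of_eq_below_of_le {β : Type*} [PartialOrder β] {a b c : ι → β} {m k : ι}
    (hac : ∀ j < m, a j = c j) (hcb : toLex c ≤ toLex b) (hkm : k ≤ m)
    (ha : a k < b k) (hc : c k < b k) : toLex a < toLex b := by
  obtain ⟨i, hcb_eq, hcb_lt⟩ := hcb.lt_of_ne fun h => hc.ne (congrFun h k)
  have hik : i ≤ k := by
    by_contra! hki
    exact hc.ne (hcb_eq k hki)
  refine ⟨i, fun j hj => (hac j (hj.trans_le (hik.trans hkm))).trans (hcb_eq j hj), ?_⟩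
  rcases hik.lt_or_eq with hik | rfl
  · change a i < b i
    exact (hac i (hik.trans_le hkm)).trans_lt hcb_lt
  · exact ha

end LexOrder

theorem not_rejectsReplica_of_price {G : Type*} [AddCommMonoid G] [PartialOrder G]
    [IsOrderedCancelAddMonoid G] {n : ℕ} (N : ℕ) {u ω x : Fin n → Fin n → ℝ}
    (P : (Fin n → ℝ) →+ G) (hP : Monotone P)
    (hweak : ∀ i z, InSimplexLe z → dotp (u i) (x i) ≤ dotp (u i) z → P (x i) ≤ P z)
    (hstrict : ∀ i z, InSimplexLe z → dotp (u i) (x i) < dotp (u i) z → P (x i) < P z)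
    (hendow : ∀ i z, InSimplexLe z → dotp (u i) (x i) < dotp (u i) z → P (ω i) < P z) :
    ¬ RejectsReplica N u ω x := by
  classical
  rintro ⟨C1, C2, y, hdisj, -, hy, hfeas, hC1, hC2, hC1_empty⟩
  let e : Fin N × Fin n → Fin n → ℝ := fun a => if a ∈ C1 then ω a.2 else x a.2
  have he_sum : ∀ j, ∑ a ∈ C1 ∪ C2, e a j = ∑ a ∈ C1, ω a.2 j + ∑ a ∈ C2, x a.2 j := by
    intro j
    rw [sum_union hdisj]
    congr 1 <;> refine sum_congr rfl fun a ha => ?_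
    · simp [e, ha]
    · simp [e, disjoint_right.mp hdisj ha]
  have hle : ∀ a ∈ C1 ∪ C2, P (e a) ≤ P (y a) := by
    intro a ha
    by_cases ha1 : a ∈ C1
    · simpa [e, ha1] using (hendow a.2 (y a) (hy a ha) (hC1 a ha1)).le
    · have ha2 : a ∈ C2 := (mem_union.mp ha).resolve_left ha1
      simpa [e, ha1] using hweak a.2 (y a) (hy a ha) (hC2 a ha2)
  have hlt : ∃ a ∈ C1 ∪ C2, P (e a) < P (y a) := by
    rcases C1.eq_empty_or_nonempty with hempty | ⟨a, ha1⟩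
    · obtain ⟨a, ha2, hpref⟩ := hC1_empty hempty
      refine ⟨a, mem_union_right _ ha2, ?_⟩
      simpa [e, hempty] using hstrict a.2 (y a) (hy a (mem_union_right _ ha2)) hpref
    · refine ⟨a, mem_union_left _ ha1, ?_⟩
      simpa [e, ha1] using hendow a.2 (y a) (hy a (mem_union_left _ ha1)) (hC1 a ha1)
  have hfeasP : ∑ a ∈ C1 ∪ C2, P (y a) ≤ ∑ a ∈ C1 ∪ C2, P (e a) := by
    simp only [← map_sum]
    refine hP fun j => ?_
    simpa only [Finset.sum_apply, he_sum] using hfeas j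
  exact (sum_lt_sum hle hlt).not_ge hfeasP

def lexValue {n : ℕ} (d : ℕ) (p : ℕ → Fin n → ℝ) : (Fin n → ℝ) →+ Lex (Fin d → ℝ) where
  toFun z := toLex fun k => dotp (p k) z
  map_zero' := congrArg toLex <| funext fun _ => by simp [dotp]
  map_add' _ _ := congrArg toLex <| funext fun _ => by simp [dotp, mul_add, sum_add_distrib]

section LexValue

variable {n d : ℕ} {p : ℕ → Fin n → ℝ}

theorem lexValue_eq_sum (z : Fin n → ℝ) :
    lexValue d p z = ∑ j, z j • toLex fun k : Fin d => p k j := by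
  change toLex _ = toLex (∑ j, z j • fun k : Fin d => p k j)
  congr 1
  funext k
  simp [dotp, mul_comm]

theorem lexValue_nonneg
    (hp : ∀ (j : Fin n) (k : ℕ), k < d → p k j ≠ 0 → (∀ l < k, p l j = 0) → 0 < p k j)
    {z : Fin n → ℝ} (hz : ∀ j, 0 ≤ z j) : 0 ≤ lexValue d p z := by
  have hcol : ∀ j, 0 ≤ toLex fun k : Fin d => p k j := by
    intro j
    by_contra! ⟨k, hzero, hneg⟩
    refine hneg.not_gt (hp j k k.2 hneg.ne fun l hl => ?_)
    exact hzero ⟨l, hl.trans k.2⟩ hl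
  rw [lexValue_eq_sum]
  exact sum_nonneg fun j _ => toLex_smul_nonneg (hcol j) (hz j)

theorem lexValue_monotone
    (hp : ∀ (j : Fin n) (k : ℕ), k < d → p k j ≠ 0 → (∀ l < k, p l j = 0) → 0 < p k j) :
    Monotone (lexValue d p) := fun z w hzw => by
  have := lexValue_nonneg hp (z := w - z) fun j => sub_nonneg.mpr (hzw j)
  rwa [map_sub, sub_nonneg] at this

end LexValue

theorem kIdx_le_pred {n : ℕ} (d : ℕ) (p α : ℕ → Fin n → ℝ) (ω : Fin n → Fin n → ℝ) (i : Fin n) :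
    kIdx d p α ω i ≤ d - 1 :=
  Nat.sInf_le (Or.inr rfl)

section Agent

variable {n d : ℕ} {u ω x : Fin n → Fin n → ℝ} {p α : ℕ → Fin n → ℝ} {i : Fin n}

theorem income_nonpos_of_lt_kIdx {k : ℕ} (hk : k < kIdx d p α ω i) :
    dotp (p k) (ω i) + α k i ≤ 0 := by
  have := kIdx_le_pred d p α ω i
  by_contra! hpos
  exact Nat.notMem_of_lt_sInf hk (Or.inl ⟨by omega, hpos⟩)

theorem income_eq_max {k : ℕ} (hα : α k i = max (dotp (p k) (fun j => x i j - ω i j)) 0) :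
    dotp (p k) (ω i) + α k i = max (dotp (p k) (x i)) (dotp (p k) (ω i)) := by
  have hsub : dotp (p k) (fun j => x i j - ω i j) = dotp (p k) (x i) - dotp (p k) (ω i) := by
    simp [dotp, mul_sub, sum_sub_distrib]
  rw [hα, hsub, add_comm, ← max_add_add_right, sub_add_cancel, zero_add]

theorem lexValue_le_of_strongCB (hCB : StrongCB u d x p) {z : Fin n → ℝ} (hz : InSimplexLe z)
    (hpref : dotp (u i) (x i) ≤ dotp (u i) z) : lexValue d p (x i) ≤ lexValue d p z := by
  by_contra! ⟨k, hagree, hlt⟩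
  exact hCB ⟨i, z, k, hz, hpref, k.2, fun l hl => hagree ⟨l, hl.trans k.2⟩ hl, hlt⟩

theorem lexValue_lt_of_isLDE_of_strongCB (hLDE : IsLDE u ω d x p α) (hCB : StrongCB u d x p)
    (hω0 : ∀ j, 0 ≤ ω i j) (hd : 1 ≤ d) {z : Fin n → ℝ} (hz : InSimplexLe z)
    (hpref : dotp (u i) (x i) < dotp (u i) z) :
    lexValue d p (x i) < lexValue d p z ∧ lexValue d p (ω i) < lexValue d p z := by
  obtain ⟨hx, -, hp, hα, hopt⟩ := hLDE
  have hmd : kIdx d p α ω i < d := by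
    have := kIdx_le_pred d p α ω i
    omega
  have hincome : ∀ k ≤ kIdx d p α ω i,
      dotp (p k) (ω i) + α k i = max (dotp (p k) (x i)) (dotp (p k) (ω i)) :=
    fun k hk => income_eq_max (hα i k (by omega))
  obtain ⟨k, hkm, hviol⟩ : ∃ k ≤ kIdx d p α ω i,
      max (dotp (p k) (x i)) (dotp (p k) (ω i)) < dotp (p k) z := by
    by_contra! hin
    exact hpref.not_ge (hopt i z ⟨hz, fun k hk => hincome k hk ▸ hin k hk⟩)
  have hbelow : ∀ k < kIdx d p α ω i, max (dotp (p k) (x i)) (dotp (p k) (ω i)) ≤ 0 :=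
    fun k hk => hincome k hk.le ▸ income_nonpos_of_lt_kIdx hk
  let m : Fin d := ⟨kIdx d p α ω i, hmd⟩
  have hx_zero := eq_zero_of_toLex_nonneg_of_nonpos (lexValue_nonneg hp (hx.1 i)) (i := m)
    fun j hj => (le_max_left _ _).trans (hbelow j hj)
  have hω_zero := eq_zero_of_toLex_nonneg_of_nonpos (lexValue_nonneg hp hω0) (i := m)
    fun j hj => (le_max_right _ _).trans (hbelow j hj)
  have hxz := lexValue_le_of_strongCB hCB hz hpref.le
  refine ⟨hxz.lt_of_ne fun h => ?_, ?_⟩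
  · exact ((le_max_left _ _).trans_lt hviol).ne (congrFun h ⟨k, by omega⟩)
  · exact toLex_lt_of_eq_below_of_le (fun j hj => (hω_zero j hj).trans (hx_zero j hj).symm) hxz
      (k := ⟨k, by omega⟩) hkm ((le_max_right _ _).trans_lt hviol)
      ((le_max_left _ _).trans_lt hviol)

end Agent

theorem lde_in_rejective_core_general {n : ℕ} (u ω : Fin n → Fin n → ℝ)
    (hω0 : ∀ i j, 0 ≤ ω i j)
    (d : ℕ) (hd : 1 ≤ d) (x : Fin n → Fin n → ℝ) (p α : ℕ → Fin n → ℝ)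
    (hLDE : IsLDE u ω d x p α) (hCB : StrongCB u d x p) :
    ∀ N : ℕ, 1 ≤ N → IsAlloc x ∧ ¬ RejectsReplica N u ω x := fun N _ =>
  ⟨hLDE.1, not_rejectsReplica_of_price N (lexValue d p) (lexValue_monotone hLDE.2.2.1)
    (fun _ _ hz hpref => lexValue_le_of_strongCB hCB hz hpref)
    (fun i _ hz hpref => (lexValue_lt_of_isLDE_of_strongCB hLDE hCB (hω0 i) hd hz hpref).1)
    (fun i _ hz hpref => (lexValue_lt_of_isLDE_of_strongCB hLDE hCB (hω0 i) hd hz hpref).2)⟩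

/-- an LDE satisfying the strong cheapest bundle property lies in the
rejective core of every replica economy: `LDE₊(u, ω) ⊆ ⋂_{N ≥ 1} RC(u, ω, N)`. -/
theorem lde_in_rejective_core {n : ℕ} (hn : 0 < n) (u ω : Fin n → Fin n → ℝ)
    (hu : ∀ i j, 0 ≤ u i j) (hω0 : ∀ i j, 0 ≤ ω i j)
    (hω1 : ∀ j, ∑ i, ω i j = 1)
    (d : ℕ) (hd : 1 ≤ d) (x : Fin n → Fin n → ℝ) (p α : ℕ → Fin n → ℝ)
    (hLDE : IsLDE u ω d x p α) (hCB : StrongCB u d x p) :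
    ∀ N : ℕ, 1 ≤ N → IsAlloc x ∧ ¬ RejectsReplica N u ω x :=
  lde_in_rejective_core_general u ω hω0 d hd x p α hLDE hCB
end

section
/- Let λ ∈ ℝⁿ with λ ≥ 0 and let x ∈ M maximize ∑_i λ_i (u_i · y_i) over all y ∈ M. Then for every agent i and every bundle y ∈ Δⁿ₋ with u_i · y ≥ u_i · x_i, one has p(λ) · y ≥ p(λ) · x_i, where p(λ) is the VCG price vector at weights λ. -/
/-!
The weighted welfare `W(λ)` is the value of an assignment linear program whose dual feasible
points are the *covers* `(π, q)` of the weights `λᵢ uᵢⱼ`: `π, q ≥ 0` and `λᵢ uᵢⱼ ≤ πᵢ + qⱼ`.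
By Egerváry's theorem a minimal cover is tight along a permutation, so there is no duality gap.
Doubling the supply of good `ℓ` raises the optimum by exactly the least price `q_ℓ` over optimal
covers: by at most that much by weak duality, and by at least that much by shifting an optimal
assignment along an alternating path of tight edges, which the minimality of `q_ℓ` forces to end
at a good of price zero. Hence every VCG price is attained by an optimal cover, and complementary
slackness at `x` shows that `(λᵢ uᵢ · xᵢ - p · xᵢ, p)` is itself a cover. Pairing its inequalities
for agent `i` with `y` gives `p · y ≥ λᵢ uᵢ · y - (λᵢ uᵢ · xᵢ - p · xᵢ) ≥ p · xᵢ`.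
-/

open Finset

/-- The feasible set for the relaxed welfare problem where the supply of good `l`
is doubled. -/
def FeasRelax {n : ℕ} (l : Fin n) (x : Fin n → Fin n → ℝ) : Prop :=
  (∀ i j, 0 ≤ x i j) ∧ (∀ i, ∑ j, x i j ≤ 1) ∧
  (∀ j, j ≠ l → ∑ i, x i j ≤ 1) ∧ (∑ i, x i l ≤ 2)

/-- `W(λ)`: the maximum weighted welfare over allocations. -/
noncomputable def Wval {n : ℕ} (u : Fin n → Fin n → ℝ) (lam : Fin n → ℝ) : ℝ :=
  sSup ((fun x => ∑ i, lam i * dotp (u i) (x i)) '' {x | IsAlloc x})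

/-- `W_l(λ)`: the maximum weighted welfare when the supply of good `l` is doubled. -/
noncomputable def Wrelax {n : ℕ} (u : Fin n → Fin n → ℝ) (lam : Fin n → ℝ)
    (l : Fin n) : ℝ :=
  sSup ((fun x => ∑ i, lam i * dotp (u i) (x i)) '' {x | FeasRelax l x})

/-- The VCG price vector `p(λ)`, with `p_l(λ) = W_l(λ) − W(λ)`. -/
noncomputable def vcg {n : ℕ} (u : Fin n → Fin n → ℝ) (lam : Fin n → ℝ) :
    Fin n → ℝ :=
  fun l => Wrelax u lam l - Wval u lam

open Filter Topology Function

namespace VCG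

variable {ι : Type*}

structure IsCover (c : ι → ι → ℝ) (π q : ι → ℝ) : Prop where
  nonneg_left (i : ι) : 0 ≤ π i
  nonneg_right (j : ι) : 0 ≤ q j
  le_add (i j : ι) : c i j ≤ π i + q j

theorem IsCover.transpose {c : ι → ι → ℝ} {π q : ι → ℝ} (h : IsCover c π q) :
    IsCover (fun j i => c i j) q π :=
  ⟨h.nonneg_right, h.nonneg_left, fun j i => (h.le_add i j).trans_eq (add_comm _ _)⟩

variable [Fintype ι]

def coverCost (π q : ι → ℝ) : ℝ := (∑ i, π i) + ∑ j, q j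

section Cover

variable {c : ι → ι → ℝ} {π q : ι → ℝ}

theorem coverCost_comm (π q : ι → ℝ) : coverCost q π = coverCost π q := add_comm _ _

theorem IsCover.sum_mul_le (h : IsCover c π q) {z : ι → ℝ} (hz : ∀ j, 0 ≤ z j) (i : ι) :
    ∑ j, c i j * z j ≤ π i * ∑ j, z j + ∑ j, q j * z j := by
  rw [mul_sum, ← sum_add_distrib]
  gcongr with j
  nlinarith [h.le_add i j, hz j]

theorem IsCover.sum_apply_perm_le (h : IsCover c π q) (σ : Equiv.Perm ι) :
    ∑ i, c i (σ i) ≤ coverCost π q := by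
  rw [coverCost, ← Equiv.sum_comp σ q, ← sum_add_distrib]
  exact sum_le_sum fun i _ => h.le_add i (σ i)

theorem IsCover.apply_perm_eq_of_le (h : IsCover c π q) {σ : Equiv.Perm ι}
    (hσ : coverCost π q ≤ ∑ i, c i (σ i)) (i : ι) : c i (σ i) = π i + q (σ i) := by
  have hle : ∀ i ∈ univ, c i (σ i) ≤ π i + q (σ i) := fun i _ => h.le_add i (σ i)
  have heq : ∑ i, c i (σ i) = ∑ i, (π i + q (σ i)) := by
    rw [sum_add_distrib, Equiv.sum_comp σ q]
    exact le_antisymm (h.sum_apply_perm_le σ) hσ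
  exact (sum_eq_sum_iff_of_le hle).1 heq i (mem_univ i)

theorem coverCost_eq_sum_apply_perm {σ : Equiv.Perm ι} (hσ : ∀ i, c i (σ i) = π i + q (σ i)) :
    coverCost π q = ∑ i, c i (σ i) := by
  simp only [hσ, sum_add_distrib, Equiv.sum_comp σ q, coverCost]

theorem IsCover.exists_shift [DecidableEq ι] (h : IsCover c π q) {A B : Finset ι}
    (hA : ∀ i ∈ A, 0 < π i) (hslack : ∀ i ∈ A, ∀ j ∉ B, c i j < π i + q j) :
    ∃ δ > 0, IsCover c (fun i => π i - if i ∈ A then δ else 0)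
        (fun j => q j + if j ∈ B then δ else 0) ∧
      coverCost (fun i => π i - if i ∈ A then δ else 0) (fun j => q j + if j ∈ B then δ else 0)
        = coverCost π q - δ * #A + δ * #B := by
  have hsmall : ∀ᶠ δ in 𝓝[>] (0 : ℝ), ∀ i ∈ A, δ ≤ π i ∧ ∀ j, j ∉ B → δ ≤ π i + q j - c i j := by
    simp only [eventually_all_finset, eventually_and, eventually_all]
    refine fun i hi => ⟨?_, fun j hj => ?_⟩
    · exact (eventually_le_nhds (hA i hi)).filter_mono nhdsWithin_le_nhds
    · exact (eventually_le_nhds (sub_pos.2 (hslack i hi j hj))).filter_mono nhdsWithin_le_nhds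
  obtain ⟨δ, hδle, hδ⟩ := (hsmall.and self_mem_nhdsWithin).exists
  refine ⟨δ, hδ, ⟨fun i => ?_, fun j => ?_, fun i j => ?_⟩, ?_⟩
  · by_cases hi : i ∈ A <;> simp [hi, (hδle i _).1, h.nonneg_left i]
  · have := h.nonneg_right j
    split_ifs <;> linarith [hδ.le]
  · have := h.le_add i j
    by_cases hi : i ∈ A
    · by_cases hj : j ∈ B
      · simp only [hi, hj, if_true]; linarith
      · have := (hδle i hi).2 j hj
        simp only [hi, hj, if_true, if_false]; linarith
    · simp only [hi, if_false]; split_ifs <;> linarith [hδ.le]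
  · simp only [coverCost, sum_sub_distrib, sum_add_distrib, sum_ite_mem, univ_inter, sum_const,
      nsmul_eq_mul]
    ring

end Cover

section Existence

variable {c : ι → ι → ℝ}

theorem continuous_coverCost : Continuous fun p : (ι → ℝ) × (ι → ℝ) => coverCost p.1 p.2 := by
  unfold coverCost
  fun_prop

theorem isCompact_setOf_isCover (c : ι → ι → ℝ) (C : ℝ) :
    IsCompact {p : (ι → ℝ) × (ι → ℝ) | IsCover c p.1 p.2 ∧ coverCost p.1 p.2 ≤ C} := by
  have hclosed : IsClosed {p : (ι → ℝ) × (ι → ℝ) | IsCover c p.1 p.2 ∧ coverCost p.1 p.2 ≤ C} := by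
    have : {p : (ι → ℝ) × (ι → ℝ) | IsCover c p.1 p.2 ∧ coverCost p.1 p.2 ≤ C} =
        (⋂ i, {p | 0 ≤ p.1 i}) ∩ (⋂ j, {p | 0 ≤ p.2 j}) ∩
          (⋂ i, ⋂ j, {p | c i j ≤ p.1 i + p.2 j}) ∩ {p | coverCost p.1 p.2 ≤ C} := by
      ext p
      simp only [Set.mem_ofPred_eq, Set.mem_inter_iff, Set.mem_iInter]
      exact ⟨fun ⟨⟨h₁, h₂, h₃⟩, h₄⟩ => ⟨⟨⟨h₁, h₂⟩, h₃⟩, h₄⟩,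
        fun ⟨⟨⟨h₁, h₂⟩, h₃⟩, h₄⟩ => ⟨⟨h₁, h₂, h₃⟩, h₄⟩⟩
    rw [this]
    refine (((isClosed_iInter fun i => isClosed_le ?_ ?_).inter
      (isClosed_iInter fun j => isClosed_le ?_ ?_)).inter
      (isClosed_iInter fun i => isClosed_iInter fun j => isClosed_le ?_ ?_)).inter
      (isClosed_le continuous_coverCost continuous_const) <;> fun_prop
  have hbox := isCompact_Icc (a := (0 : (ι → ℝ) × (ι → ℝ))) (b := (fun _ => C, fun _ => C))
  refine hbox.of_isClosed_subset hclosed ?_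
  rintro ⟨π, q⟩ ⟨h, hC⟩
  have hπ : ∀ i, π i ≤ coverCost π q := fun i =>
    (single_le_sum (fun i _ => h.nonneg_left i) (mem_univ i)).trans
      (le_add_of_nonneg_right (sum_nonneg fun j _ => h.nonneg_right j))
  have hq : ∀ j, q j ≤ coverCost π q := fun j =>
    (single_le_sum (fun j _ => h.nonneg_right j) (mem_univ j)).trans
      (le_add_of_nonneg_left (sum_nonneg fun i _ => h.nonneg_left i))
  exact ⟨⟨h.nonneg_left, h.nonneg_right⟩,
    ⟨fun i => (hπ i).trans hC, fun j => (hq j).trans hC⟩⟩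

theorem exists_isCover_forall_le {C : ℝ} (hne : ∃ π q, IsCover c π q ∧ coverCost π q ≤ C)
    {f : (ι → ℝ) × (ι → ℝ) → ℝ} (hf : Continuous f) :
    ∃ π q, IsCover c π q ∧ coverCost π q ≤ C ∧
      ∀ π' q', IsCover c π' q' → coverCost π' q' ≤ C → f (π, q) ≤ f (π', q') := by
  obtain ⟨π₀, q₀, hne⟩ := hne
  obtain ⟨⟨π, q⟩, ⟨h, hC⟩, hmin⟩ :=
    (isCompact_setOf_isCover c C).exists_isMinOn ⟨(π₀, q₀), hne⟩ hf.continuousOn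
  exact ⟨π, q, h, hC, fun π' q' h' hC' => hmin ⟨h', hC'⟩⟩

def IsMinCover (c : ι → ι → ℝ) (π q : ι → ℝ) : Prop :=
  IsCover c π q ∧ ∀ π' q', IsCover c π' q' → coverCost π q ≤ coverCost π' q'

theorem IsMinCover.transpose {π q : ι → ℝ} (h : IsMinCover c π q) :
    IsMinCover (fun j i => c i j) q π :=
  ⟨h.1.transpose, fun π' q' h' => by
    simpa only [coverCost_comm] using h.2 q' π' h'.transpose⟩

theorem exists_isMinCover (hc : ∀ i j, 0 ≤ c i j) : ∃ π q, IsMinCover c π q := by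
  set M := ∑ i, ∑ j, c i j
  have hM : IsCover c (fun _ => M) 0 := by
    refine ⟨fun _ => sum_nonneg fun i _ => sum_nonneg fun j _ => hc i j, fun _ => le_rfl,
      fun i j => ?_⟩
    simp only [Pi.zero_apply, add_zero]
    exact (single_le_sum (fun j _ => hc i j) (mem_univ j)).trans
      (single_le_sum (f := fun i => ∑ j, c i j) (fun i _ => sum_nonneg fun j _ => hc i j)
        (mem_univ i))
  obtain ⟨π, q, h, hC, hmin⟩ := exists_isCover_forall_le ⟨_, _, hM, le_rfl⟩
    (continuous_coverCost (ι := ι))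
  refine ⟨π, q, h, fun π' q' h' => ?_⟩
  by_cases hC' : coverCost π' q' ≤ coverCost (fun _ : ι => M) 0
  · exact hmin π' q' h' hC'
  · exact hC.trans (le_of_not_ge hC')

theorem IsMinCover.card_le_card_biUnion [DecidableEq ι] {π q : ι → ℝ} (h : IsMinCover c π q)
    {A : Finset ι} (hA : ∀ i ∈ A, 0 < π i) :
    #A ≤ #(A.biUnion fun i => {j | c i j = π i + q j}) := by
  set N := A.biUnion fun i => {j | c i j = π i + q j}
  by_contra! hlt
  obtain ⟨δ, hδ, hcover, hcost⟩ := h.1.exists_shift (B := N) hA fun i hi j hj =>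
    (h.1.le_add i j).lt_of_ne fun heq => hj (mem_biUnion.2 ⟨i, hi, by simpa using heq⟩)
  have := h.2 _ _ hcover
  have : (#N : ℝ) < #A := by exact_mod_cast hlt
  nlinarith

/-- Egerváry's theorem: a minimal cover satisfies Hall's condition on its tight edges, since
otherwise a shift would lower its cost. -/
theorem exists_isCover_perm_tight [DecidableEq ι] (hc : ∀ i j, 0 ≤ c i j) :
    ∃ π q, IsCover c π q ∧ ∃ σ : Equiv.Perm ι, ∀ i, c i (σ i) = π i + q (σ i) := by
  obtain ⟨π, q, hmin⟩ := exists_isMinCover hc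
  set t : ι → Finset ι := fun i => {j | c i j = π i + q j}
  have hall : ∀ A : Finset ι, #A ≤ #(A.biUnion t) := by
    intro A
    by_cases hA : ∀ i ∈ A, 0 < π i
    · exact hmin.card_le_card_biUnion hA
    simp only [not_forall, not_lt] at hA
    obtain ⟨i₀, hi₀, hπi₀⟩ := hA
    set N := A.biUnion t
    -- a good `j` with `q j = 0` would be tight for `i₀`, since `c ≥ 0`
    have hq : ∀ j ∈ Nᶜ, 0 < q j := by
      intro j hj
      refine (hmin.1.nonneg_right j).lt_of_ne fun hqj => (mem_compl.1 hj) ?_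
      refine mem_biUnion.2 ⟨i₀, hi₀, mem_filter.2 ⟨mem_univ j, ?_⟩⟩
      linarith [hmin.1.le_add i₀ j, hc i₀ j, hmin.1.nonneg_left i₀]
    have hsub : (Nᶜ.biUnion fun j => {i | c i j = q j + π i}) ⊆ Aᶜ := by
      intro i hi
      rw [mem_compl]
      intro hiA
      obtain ⟨j, hj, hij⟩ := mem_biUnion.1 hi
      exact mem_compl.1 hj (mem_biUnion.2 ⟨i, hiA, by simpa [t, add_comm] using hij⟩)
    have := (hmin.transpose.card_le_card_biUnion hq).trans (card_le_card hsub)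
    rw [card_compl, card_compl] at this
    have := card_le_univ A
    have := card_le_univ N
    omega
  obtain ⟨σ, hσinj, hσt⟩ := (all_card_le_biUnion_card_iff_exists_injective t).1 hall
  exact ⟨π, q, hmin.1, Equiv.ofBijective σ hσinj.bijective_of_finite,
    fun i => by simpa [t] using hσt i⟩

end Existence

section Augmenting

theorem sum_apply_update_add {κ M : Type*} [DecidableEq ι] [AddCommMonoid M]
    (f : ι → κ → M) (τ : ι → κ) (k : ι) (b : κ) :
    ∑ i, f i (update τ k b i) + f k (τ k) = ∑ i, f i (τ i) + f k b := by
  rw [← add_sum_erase _ _ (mem_univ k), ← add_sum_erase _ _ (mem_univ k), update_self,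
    sum_congr rfl fun i hi => by rw [update_of_ne (ne_of_mem_erase hi)]]
  abel

theorem card_fiber_perm [DecidableEq ι] (σ : Equiv.Perm ι) (g : ι) : #{i | σ i = g} = 1 := by
  rw [card_eq_one]
  exact ⟨σ.symm g, by ext i; simp [Equiv.eq_symm_apply]⟩

theorem card_fiber_update_add {κ : Type*} [DecidableEq ι] [DecidableEq κ]
    (τ : ι → κ) (k : ι) (b g : κ) :
    #{i | update τ k b i = g} + (if τ k = g then 1 else 0) =
      #{i | τ i = g} + if b = g then 1 else 0 := by
  simpa only [card_filter] using
    sum_apply_update_add (fun _ x => if x = g then 1 else 0) τ k b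

variable {c : ι → ι → ℝ} {π q : ι → ℝ} {σ : Equiv.Perm ι}

/-- Goods reachable from `m` by at most `K` alternating steps `b ↦ σ k` along tight edges
`(k, b)`. -/
def reach (c : ι → ι → ℝ) (π q : ι → ℝ) (σ : Equiv.Perm ι) (m : ι) : ℕ → Set ι
  | 0 => {m}
  | K + 1 => reach c π q σ m K ∪ σ '' {k | ∃ b ∈ reach c π q σ m K, c k b = π k + q b}

/-- Shifting `σ` along an alternating path from `m` to `b` frees `b`, doubles `m`, and gains
`q m - q b`. -/
theorem exists_assignment_of_mem_reach [DecidableEq ι]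
    (hσ : ∀ i, c i (σ i) = π i + q (σ i)) (m : ι) (K : ℕ) :
    ∀ b ∈ reach c π q σ m K, ∃ τ : ι → ι,
      (∀ g, #{i | τ i = g} + (if b = g then 1 else 0) = 1 + if m = g then 1 else 0) ∧
      (∀ i, τ i ≠ σ i → σ i ∈ reach c π q σ m K) ∧
      ∑ i, c i (τ i) + q b = coverCost π q + q m := by
  induction K with
  | zero =>
    rintro b rfl
    refine ⟨σ, fun g => ?_, fun i h => (h rfl).elim, by rw [coverCost_eq_sum_apply_perm hσ]⟩
    rw [card_fiber_perm]
  | succ K ih =>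
    have hmono : reach c π q σ m K ⊆ reach c π q σ m (K + 1) := Set.subset_union_left
    rintro b' (hb' | ⟨k, ⟨b, hb, hkb⟩, rfl⟩)
    · obtain ⟨τ, hcard, hmoved, hval⟩ := ih b' hb'
      exact ⟨τ, hcard, fun i hi => hmono (hmoved i hi), hval⟩
    by_cases hk : σ k ∈ reach c π q σ m K
    · obtain ⟨τ, hcard, hmoved, hval⟩ := ih _ hk
      exact ⟨τ, hcard, fun i hi => hmono (hmoved i hi), hval⟩
    obtain ⟨τ, hcard, hmoved, hval⟩ := ih b hb
    have hτk : τ k = σ k := by_contra fun h => hk (hmoved k h)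
    refine ⟨update τ k b, fun g => ?_, fun i hi => ?_, ?_⟩
    · have := card_fiber_update_add τ k b g
      rw [hτk] at this
      have := hcard g
      omega
    · by_cases hik : i = k
      · subst hik
        exact Or.inr ⟨i, ⟨b, hb, hkb⟩, rfl⟩
      · rw [update_of_ne hik] at hi
        exact hmono (hmoved i hi)
    · have := sum_apply_update_add c τ k b
      rw [hτk, hσ k, hkb] at this
      linarith

theorem exists_assignment_ge_coverCost_add [DecidableEq ι] (h : IsCover c π q)
    (hσ : ∀ i, c i (σ i) = π i + q (σ i)) (m : ι)
    (hmin : ∀ π' q', IsCover c π' q' → coverCost π' q' ≤ coverCost π q → q m ≤ q' m) :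
    ∃ τ : ι → ι, (∀ g, #{i | τ i = g} ≤ 1 + if m = g then 1 else 0) ∧
      coverCost π q + q m ≤ ∑ i, c i (τ i) := by
  classical
  set R : Finset ι := {b | ∃ K, b ∈ reach c π q σ m K}
  by_cases hzero : ∃ b ∈ R, q b = 0
  · obtain ⟨b, hb, hqb⟩ := hzero
    obtain ⟨K, hbK⟩ := (mem_filter.1 hb).2
    obtain ⟨τ, hcard, -, hval⟩ := exists_assignment_of_mem_reach hσ m K b hbK
    exact ⟨τ, fun g => by have := hcard g; omega, by linarith⟩
  push Not at hzero
  -- otherwise lowering `q` on `R` and raising `π` on `σ⁻¹ R` gives a cover of the same cost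
  -- with a smaller `q m`
  set A : Finset ι := R.image σ.symm
  have hpos : ∀ j ∈ R, 0 < q j := fun j hj => (h.nonneg_right j).lt_of_ne' (hzero j hj)
  have hslack : ∀ j ∈ R, ∀ i ∉ A, c i j < q j + π i := by
    intro j hj i hi
    refine ((h.le_add i j).trans_eq (add_comm _ _)).lt_of_ne fun heq => hi ?_
    obtain ⟨K, hK⟩ := (mem_filter.1 hj).2
    refine mem_image.2 ⟨σ i, mem_filter.2 ⟨mem_univ _, K + 1, ?_⟩, σ.symm_apply_apply i⟩
    exact Or.inr ⟨i, ⟨j, hK, by linarith⟩, rfl⟩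
  obtain ⟨δ, hδ, hcover, hcost⟩ := h.transpose.exists_shift hpos hslack
  have hcard : #A = #R := card_image_of_injective _ σ.symm.injective
  have hm : m ∈ R := mem_filter.2 ⟨mem_univ m, 0, rfl⟩
  have := hmin _ _ hcover.transpose (by rw [coverCost_comm, hcost, hcard, coverCost_comm]; simp)
  simp only [hm, if_true] at this
  linarith

end Augmenting

section Economy

variable {n : ℕ} {u : Fin n → Fin n → ℝ} {lam : Fin n → ℝ} {π q : Fin n → ℝ}
  {x z : Fin n → Fin n → ℝ}

def weight (u : Fin n → Fin n → ℝ) (lam : Fin n → ℝ) : Fin n → Fin n → ℝ :=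
  fun i j => lam i * u i j

def welfare (u : Fin n → Fin n → ℝ) (lam : Fin n → ℝ) (z : Fin n → Fin n → ℝ) : ℝ :=
  ∑ i, lam i * dotp (u i) (z i)

def IsOptimalAlloc (u : Fin n → Fin n → ℝ) (lam : Fin n → ℝ) (x : Fin n → Fin n → ℝ) : Prop :=
  IsAlloc x ∧ ∀ y, IsAlloc y → welfare u lam y ≤ welfare u lam x

theorem weight_nonneg (hu : ∀ i j, 0 ≤ u i j) (hlam : ∀ i, 0 ≤ lam i) (i j : Fin n) :
    0 ≤ weight u lam i j :=
  mul_nonneg (hlam i) (hu i j)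

theorem dotp_weight (i : Fin n) (y : Fin n → ℝ) :
    dotp (weight u lam i) y = lam i * dotp (u i) y := by
  simp only [dotp, weight, mul_sum, mul_assoc]

theorem IsCover.dotp_le (h : IsCover (weight u lam) π q) {y : Fin n → ℝ} (hy : ∀ j, 0 ≤ y j)
    (i : Fin n) : lam i * dotp (u i) y ≤ π i * ∑ j, y j + dotp q y := by
  rw [← dotp_weight]
  exact h.sum_mul_le hy i

theorem sum_dotp_eq (hz : IsAlloc z) (q : Fin n → ℝ) : ∑ i, dotp q (z i) = ∑ j, q j := by
  simp only [dotp, sum_comm (γ := Fin n), ← mul_sum, hz.2.2, mul_one]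

theorem IsCover.mul_dotp_le_of_isAlloc (h : IsCover (weight u lam) π q) (hz : IsAlloc z)
    (i : Fin n) : lam i * dotp (u i) (z i) ≤ π i + dotp q (z i) := by
  simpa [hz.2.1 i] using h.dotp_le (hz.1 i) i

theorem IsCover.welfare_le_of_isAlloc (h : IsCover (weight u lam) π q) (hz : IsAlloc z) :
    welfare u lam z ≤ coverCost π q := by
  rw [coverCost, ← sum_dotp_eq hz q, ← sum_add_distrib]
  exact sum_le_sum fun i _ => h.mul_dotp_le_of_isAlloc hz i

theorem IsCover.mul_dotp_eq_of_isAlloc (h : IsCover (weight u lam) π q) (hz : IsAlloc z)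
    (hcost : coverCost π q ≤ welfare u lam z) (i : Fin n) :
    lam i * dotp (u i) (z i) = π i + dotp q (z i) := by
  refine (sum_eq_sum_iff_of_le fun i _ => h.mul_dotp_le_of_isAlloc hz i).1 ?_ i (mem_univ i)
  rw [sum_add_distrib, sum_dotp_eq hz]
  exact le_antisymm (h.welfare_le_of_isAlloc hz) hcost

theorem IsCover.welfare_le_of_feasRelax (h : IsCover (weight u lam) π q) {m : Fin n}
    (hz : FeasRelax m z) : welfare u lam z ≤ coverCost π q + q m := by
  obtain ⟨hz0, hrow, hcol, hcolm⟩ := hz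
  have hcols : ∀ j, q j * ∑ i, z i j ≤ q j + if j = m then q m else 0 := by
    intro j
    by_cases hj : j = m
    · subst hj
      simp only [if_true]
      nlinarith [h.nonneg_right j]
    · simp only [hj, if_false, add_zero]
      exact mul_le_of_le_one_right (h.nonneg_right j) (hcol j hj)
  calc welfare u lam z
      ≤ ∑ i, (π i + dotp q (z i)) := sum_le_sum fun i _ =>
        (h.dotp_le (hz0 i) i).trans (by nlinarith [hrow i, h.nonneg_left i])
    _ = (∑ i, π i) + ∑ j, q j * ∑ i, z i j := by
        simp only [sum_add_distrib, dotp, mul_sum]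
        rw [sum_comm]
    _ ≤ (∑ i, π i) + ∑ j, (q j + if j = m then q m else 0) := by gcongr with j; exact hcols j
    _ = coverCost π q + q m := by simp [coverCost, sum_add_distrib, add_assoc]

def assignMatrix (τ : Fin n → Fin n) : Fin n → Fin n → ℝ := fun i j => if τ i = j then 1 else 0

theorem dotp_assignMatrix (a : Fin n → ℝ) (τ : Fin n → Fin n) (i : Fin n) :
    dotp a (assignMatrix τ i) = a (τ i) := by
  simp [dotp, assignMatrix]

theorem sum_assignMatrix_row (τ : Fin n → Fin n) (i : Fin n) : ∑ j, assignMatrix τ i j = 1 := by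
  simp [assignMatrix]

theorem sum_assignMatrix_apply (τ : Fin n → Fin n) (j : Fin n) :
    ∑ i, assignMatrix τ i j = #{i | τ i = j} := by
  simp [assignMatrix]

theorem welfare_assignMatrix (τ : Fin n → Fin n) :
    welfare u lam (assignMatrix τ) = ∑ i, weight u lam i (τ i) := by
  simp only [welfare, dotp_assignMatrix, weight]

theorem isAlloc_assignMatrix (σ : Equiv.Perm (Fin n)) : IsAlloc (assignMatrix σ) := by
  refine ⟨fun i j => by unfold assignMatrix; positivity, fun i => ?_, fun j => ?_⟩
  · exact sum_assignMatrix_row σ i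
  · rw [sum_assignMatrix_apply, card_fiber_perm, Nat.cast_one]

theorem feasRelax_assignMatrix {τ : Fin n → Fin n} {m : Fin n}
    (hτ : ∀ g, #{i | τ i = g} ≤ 1 + if m = g then 1 else 0) : FeasRelax m (assignMatrix τ) := by
  refine ⟨fun i j => by unfold assignMatrix; positivity, fun i => ?_, fun j hj => ?_, ?_⟩
  · exact (sum_assignMatrix_row τ i).le
  · have := hτ j
    rw [if_neg (Ne.symm hj)] at this
    rw [sum_assignMatrix_apply]
    exact_mod_cast this
  · have := hτ m
    rw [if_pos rfl] at this
    rw [sum_assignMatrix_apply]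
    exact_mod_cast this

theorem IsOptimalAlloc.Wval_eq (hx : IsOptimalAlloc u lam x) : Wval u lam = welfare u lam x :=
  IsGreatest.csSup_eq ⟨⟨x, hx.1, rfl⟩, by rintro _ ⟨y, hy, rfl⟩; exact hx.2 y hy⟩

theorem Wrelax_le (h : IsCover (weight u lam) π q) (m : Fin n) :
    Wrelax u lam m ≤ coverCost π q + q m := by
  have hzero : FeasRelax m (0 : Fin n → Fin n → ℝ) := by simp [FeasRelax]
  refine csSup_le ⟨_, 0, hzero, rfl⟩ ?_
  rintro _ ⟨z, hz, rfl⟩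
  exact h.welfare_le_of_feasRelax hz

theorem le_Wrelax (h : IsCover (weight u lam) π q) {m : Fin n} (hz : FeasRelax m z) :
    welfare u lam z ≤ Wrelax u lam m :=
  le_csSup ⟨_, by rintro _ ⟨z, hz, rfl⟩; exact h.welfare_le_of_feasRelax hz⟩ ⟨z, hz, rfl⟩

theorem IsOptimalAlloc.exists_isCover_coverCost_eq (hu : ∀ i j, 0 ≤ u i j)
    (hlam : ∀ i, 0 ≤ lam i) (hx : IsOptimalAlloc u lam x) :
    ∃ π q, IsCover (weight u lam) π q ∧ coverCost π q = welfare u lam x ∧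
      ∃ σ : Equiv.Perm (Fin n), welfare u lam x ≤ ∑ i, weight u lam i (σ i) := by
  obtain ⟨π, q, h, σ, hσ⟩ := exists_isCover_perm_tight (weight_nonneg hu hlam)
  have hσx : ∑ i, weight u lam i (σ i) ≤ welfare u lam x := by
    rw [← welfare_assignMatrix]
    exact hx.2 _ (isAlloc_assignMatrix σ)
  rw [← coverCost_eq_sum_apply_perm hσ] at hσx
  have hcost := le_antisymm hσx (h.welfare_le_of_isAlloc hx.1)
  exact ⟨π, q, h, hcost, σ, by rw [← coverCost_eq_sum_apply_perm hσ, hcost]⟩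

theorem IsOptimalAlloc.exists_isCover_vcg_eq (hu : ∀ i j, 0 ≤ u i j) (hlam : ∀ i, 0 ≤ lam i)
    (hx : IsOptimalAlloc u lam x) (m : Fin n) :
    ∃ π q, IsCover (weight u lam) π q ∧ coverCost π q = welfare u lam x ∧ vcg u lam m = q m := by
  obtain ⟨π₀, q₀, h₀, hcost₀, σ, hσ⟩ := hx.exists_isCover_coverCost_eq hu hlam
  obtain ⟨π, q, h, hcost, hmin⟩ := exists_isCover_forall_le ⟨π₀, q₀, h₀, hcost₀.le⟩
    (f := fun p => p.2 m) (by fun_prop)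
  have hcostx : coverCost π q = welfare u lam x :=
    le_antisymm hcost (h.welfare_le_of_isAlloc hx.1)
  have htight := h.apply_perm_eq_of_le (σ := σ) (hcostx ▸ hσ)
  obtain ⟨τ, hτ, hτval⟩ := exists_assignment_ge_coverCost_add h htight m
    fun π' q' h' hcost' => hmin π' q' h' (hcost'.trans hcost)
  have hlower : coverCost π q + q m ≤ Wrelax u lam m := by
    refine hτval.trans ?_
    rw [← welfare_assignMatrix]
    exact le_Wrelax h (feasRelax_assignMatrix hτ)
  refine ⟨π, q, h, hcostx, ?_⟩
  rw [vcg, hx.Wval_eq, ← hcostx]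
  linarith [Wrelax_le h m]

theorem IsOptimalAlloc.vcg_le (hx : IsOptimalAlloc u lam x) (h : IsCover (weight u lam) π q)
    (hcost : coverCost π q = welfare u lam x) (l : Fin n) : vcg u lam l ≤ q l := by
  rw [vcg, hx.Wval_eq, ← hcost]
  linarith [Wrelax_le h l]

theorem dotp_le_dotp {a b y : Fin n → ℝ} (hab : ∀ j, a j ≤ b j) (hy : ∀ j, 0 ≤ y j) :
    dotp a y ≤ dotp b y :=
  sum_le_sum fun j _ => mul_le_mul_of_nonneg_right (hab j) (hy j)

theorem IsOptimalAlloc.isCover_vcg (hu : ∀ i j, 0 ≤ u i j) (hlam : ∀ i, 0 ≤ lam i)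
    (hx : IsOptimalAlloc u lam x) :
    IsCover (weight u lam) (fun k => lam k * dotp (u k) (x k) - dotp (vcg u lam) (x k))
      (vcg u lam) := by
  have hvcg := hx.exists_isCover_vcg_eq hu hlam
  obtain ⟨π₀, q₀, h₀, hcost₀, -⟩ := hx.exists_isCover_coverCost_eq hu hlam
  refine ⟨fun k => ?_, fun j => ?_, fun k j => ?_⟩
  · have := dotp_le_dotp (hx.vcg_le h₀ hcost₀) (hx.1.1 k)
    have := h₀.mul_dotp_eq_of_isAlloc hx.1 hcost₀.le k
    linarith [h₀.nonneg_left k]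
  · obtain ⟨π, q, h, -, hj⟩ := hvcg j
    exact hj ▸ h.nonneg_right j
  · obtain ⟨π, q, h, hcost, hj⟩ := hvcg j
    have := dotp_le_dotp (hx.vcg_le h hcost) (hx.1.1 k)
    have := h.mul_dotp_eq_of_isAlloc hx.1 hcost.le k
    linarith [h.le_add k j]

theorem IsCover.dotp_le_of_inSimplexLe (h : IsCover (weight u lam) π q) {y : Fin n → ℝ}
    (hy : InSimplexLe y) (i : Fin n) : lam i * dotp (u i) y - π i ≤ dotp q y := by
  have := h.dotp_le hy.1 i
  nlinarith [h.nonneg_left i, hy.2]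

end Economy

end VCG

theorem vcg_preferred_costs_more_general {n : ℕ} (u : Fin n → Fin n → ℝ)
    (hu : ∀ i j, 0 ≤ u i j)
    (lam : Fin n → ℝ) (hlam : ∀ i, 0 ≤ lam i)
    (x : Fin n → Fin n → ℝ) (hx : IsAlloc x)
    (hmax : ∀ y, IsAlloc y →
      ∑ i, lam i * dotp (u i) (y i) ≤ ∑ i, lam i * dotp (u i) (x i)) :
    ∀ (i : Fin n) (y : Fin n → ℝ), InSimplexLe y →
      dotp (u i) (x i) ≤ dotp (u i) y →
      dotp (vcg u lam) (x i) ≤ dotp (vcg u lam) y := by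
  intro i y hy hpref
  have hopt : VCG.IsOptimalAlloc u lam x := ⟨hx, hmax⟩
  have hcover := (hopt.isCover_vcg hu hlam).dotp_le_of_inSimplexLe hy i
  have := mul_le_mul_of_nonneg_left hpref (hlam i)
  linarith

/-- at a weighted-welfare-maximizing allocation, any bundle weakly
preferred by agent `i` costs at least as much as `x_i` at the VCG prices. -/
theorem vcg_preferred_costs_more {n : ℕ} (hn : 0 < n) (u : Fin n → Fin n → ℝ)
    (hu : ∀ i j, 0 ≤ u i j)
    (lam : Fin n → ℝ) (hlam : ∀ i, 0 ≤ lam i)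
    (x : Fin n → Fin n → ℝ) (hx : IsAlloc x)
    (hmax : ∀ y, IsAlloc y →
      ∑ i, lam i * dotp (u i) (y i) ≤ ∑ i, lam i * dotp (u i) (x i)) :
    ∀ (i : Fin n) (y : Fin n → ℝ), InSimplexLe y →
      dotp (u i) (x i) ≤ dotp (u i) y →
      dotp (vcg u lam) (x i) ≤ dotp (vcg u lam) y :=
  vcg_preferred_costs_more_general u hu lam hlam x hx hmax
end

section
/- Fix an agent i whose endowment satisfies 0 < ω_{ij} ≤ 1 for every good j. For λ ∈ ℝⁿ with λ ≥ 0 and α ≥ 0, define the budget set C_i(λ, α) := {y ∈ Δⁿ₋ : p(λ) · y ≤ p(λ) · ω_i + α}. Suppose λ^t → λ in {λ ∈ ℝⁿ : λ ≥ 0}, α^t → α with α^t, α ≥ 0, and p(λ) ≠ 0. Then lim_{t→∞} max{u_i · y : y ∈ C_i(λ^t, α^t)} = max{u_i · y : y ∈ C_i(λ, α)}. -/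
open Finset

/-- The maximal utility of agent `i` over the budget set
`C_i(λ, α) = {y ∈ Δⁿ₋ : p(λ) · y ≤ p(λ) · ω_i + α}`. -/
noncomputable def optVal {n : ℕ} (u : Fin n → Fin n → ℝ) (i : Fin n)
    (ωi : Fin n → ℝ) (lam : Fin n → ℝ) (a : ℝ) : ℝ :=
  sSup {v | ∃ y : Fin n → ℝ, InSimplexLe y ∧
            dotp (vcg u lam) y ≤ dotp (vcg u lam) ωi + a ∧
            v = dotp (u i) y}

/-!
The VCG prices are differences of suprema of functions that are linear in `λ` with uniformly
bounded coefficients, hence Lipschitz in `λ`; they are also nonnegative (relaxing a supply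
constraint can only raise welfare), so nonzero limit prices and a strictly positive endowment
make the limit income `p(λ) · ω_i + α` positive. At positive income the optimal value is
continuous in (prices, income): on `Δⁿ₋` a price perturbation of sup norm `δ` moves `p · y` by at
most `δ`, so it is absorbed by raising the income by `δ`, and raising the income from `d` to `d'`
raises the value at most by the factor `d' / d`, because shrinking a bundle by `d / d'` restores
affordability.
-/

open Filter Topology

section Budget
variable {n : ℕ}

lemma dotp_eq_dotProduct (a b : Fin n → ℝ) : dotp a b = a ⬝ᵥ b := rfl

lemma abs_dotp_le_norm {y : Fin n → ℝ} (hy : InSimplexLe y) (a : Fin n → ℝ) :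
    |dotp a y| ≤ ‖a‖ :=
  calc |dotp a y| ≤ ∑ j, |a j * y j| := abs_sum_le_sum_abs _ _
    _ ≤ ∑ j, ‖a‖ * y j := sum_le_sum fun j _ => by
        rw [abs_mul, abs_of_nonneg (hy.1 j), ← Real.norm_eq_abs]
        exact mul_le_mul_of_nonneg_right (norm_le_pi_norm a j) (hy.1 j)
    _ = ‖a‖ * ∑ j, y j := (mul_sum _ _ _).symm
    _ ≤ ‖a‖ := mul_le_of_le_one_right (norm_nonneg a) hy.2

lemma InSimplexLe.smul {y : Fin n → ℝ} (hy : InSimplexLe y) {θ : ℝ} (h0 : 0 ≤ θ)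
    (h1 : θ ≤ 1) : InSimplexLe (θ • y) := by
  refine ⟨fun j => mul_nonneg h0 (hy.1 j), ?_⟩
  simp only [Pi.smul_apply, smul_eq_mul, ← mul_sum]
  exact mul_le_one₀ h1 (sum_nonneg fun j _ => hy.1 j) hy.2

def budgetSet (q : Fin n → ℝ) (c : ℝ) : Set (Fin n → ℝ) := {y | InSimplexLe y ∧ dotp q y ≤ c}

noncomputable def budgetValue (v q : Fin n → ℝ) (c : ℝ) : ℝ := sSup (dotp v '' budgetSet q c)

lemma zero_mem_budgetSet (q : Fin n → ℝ) {c : ℝ} (hc : 0 ≤ c) : 0 ∈ budgetSet q c :=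
  ⟨⟨fun _ => le_rfl, by simp⟩, by simpa [dotp] using hc⟩

lemma bddAbove_dotp_image_budgetSet (v q : Fin n → ℝ) (c : ℝ) :
    BddAbove (dotp v '' budgetSet q c) :=
  ⟨‖v‖, Set.forall_mem_image.2 fun _ hy => (le_abs_self _).trans (abs_dotp_le_norm hy.1 v)⟩

lemma budgetValue_mono {v q r : Fin n → ℝ} {c d : ℝ} (hc : 0 ≤ c)
    (h : budgetSet q c ⊆ budgetSet r d) : budgetValue v q c ≤ budgetValue v r d :=
  csSup_le_csSup (bddAbove_dotp_image_budgetSet v r d)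
    ⟨_, Set.mem_image_of_mem _ (zero_mem_budgetSet q hc)⟩ (Set.image_mono h)

lemma mul_budgetValue_le {v r : Fin n → ℝ} {d d' : ℝ} (hd : 0 < d) (hdd : d ≤ d') :
    d * budgetValue v r d' ≤ d' * budgetValue v r d := by
  have hd' : 0 < d' := hd.trans_le hdd
  have hbound : budgetValue v r d' ≤ d' * budgetValue v r d / d := by
    refine csSup_le ⟨_, Set.mem_image_of_mem _ (zero_mem_budgetSet r hd'.le)⟩
      (Set.forall_mem_image.2 fun y hy => ?_)
    have hθy : (d / d') • y ∈ budgetSet r d := by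
      refine ⟨hy.1.smul (by positivity) ((div_le_one hd').2 hdd), ?_⟩
      rw [dotp_eq_dotProduct, dotProduct_smul, smul_eq_mul, ← dotp_eq_dotProduct]
      calc d / d' * dotp r y ≤ d / d' * d' := mul_le_mul_of_nonneg_left hy.2 (by positivity)
        _ = d := div_mul_cancel₀ d hd'.ne'
    have hle : d / d' * dotp v y ≤ budgetValue v r d := by
      rw [← smul_eq_mul, dotp_eq_dotProduct, ← dotProduct_smul]
      exact le_csSup (bddAbove_dotp_image_budgetSet v r d) (Set.mem_image_of_mem _ hθy)
    rw [le_div_iff₀ hd]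
    rw [div_mul_eq_mul_div, div_le_iff₀ hd'] at hle
    linarith
  rw [mul_comm]
  exact (le_div_iff₀ hd).1 hbound

lemma budgetSet_subset_add_dist (q r : Fin n → ℝ) (c d : ℝ) :
    budgetSet q c ⊆ budgetSet r (d + (dist c d + dist q r)) := by
  rintro y ⟨hy, hqy⟩
  refine ⟨hy, ?_⟩
  have hdiff : dotp r y - dotp q y ≤ dist q r := by
    rw [dist_comm, dist_eq_norm]
    simpa only [dotp_eq_dotProduct, sub_dotProduct] using
      (le_abs_self _).trans (abs_dotp_le_norm hy (r - q))
  linarith [le_abs_self (c - d), Real.dist_eq c d]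

lemma mul_budgetValue_le_add_dist {v q r : Fin n → ℝ} {c d : ℝ} (hc : 0 ≤ c) (hd : 0 < d) :
    d * budgetValue v q c ≤ (d + (dist c d + dist q r)) * budgetValue v r d :=
  calc d * budgetValue v q c
      ≤ d * budgetValue v r (d + (dist c d + dist q r)) :=
        mul_le_mul_of_nonneg_left (budgetValue_mono hc (budgetSet_subset_add_dist q r c d)) hd.le
    _ ≤ (d + (dist c d + dist q r)) * budgetValue v r d :=
        mul_budgetValue_le hd (le_add_of_nonneg_right (by positivity))

theorem continuousAt_budgetValue (v : Fin n → ℝ) {r : Fin n → ℝ} {d : ℝ} (hd : 0 < d) :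
    ContinuousAt (fun qc : (Fin n → ℝ) × ℝ => budgetValue v qc.1 qc.2) (r, d) := by
  set ε : (Fin n → ℝ) × ℝ → ℝ := fun qc => dist qc.2 d + dist qc.1 r
  have hε : Tendsto ε (𝓝 (r, d)) (𝓝 0) := by
    have : Continuous ε := by fun_prop
    simpa [ε] using this.tendsto (r, d)
  have hc : Tendsto Prod.snd (𝓝 (r, d)) (𝓝 d) := continuous_snd.tendsto _
  have hpos : ∀ᶠ qc in 𝓝 (r, d), 0 < qc.2 := hc.eventually (lt_mem_nhds hd)
  set V := budgetValue v r d
  have hupper : Tendsto (fun qc => (d + ε qc) / d * V) (𝓝 (r, d)) (𝓝 V) := by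
    simpa [hd.ne'] using (((tendsto_const_nhds (x := d)).add hε).div_const d).mul_const V
  have hlower : Tendsto (fun qc => qc.2 / (qc.2 + ε qc) * V) (𝓝 (r, d)) (𝓝 V) := by
    simpa [hd.ne'] using (hc.div (hc.add hε) (by simpa using hd.ne')).mul_const V
  refine tendsto_of_tendsto_of_tendsto_of_le_of_le' hlower hupper ?_ ?_
  · filter_upwards [hpos] with qc hqc
    have h := mul_budgetValue_le_add_dist (v := v) (q := r) (r := qc.1) hd.le hqc
    rw [dist_comm d, dist_comm r] at h
    rw [div_mul_eq_mul_div, div_le_iff₀ (by positivity)]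
    linarith
  · filter_upwards [hpos] with qc hqc
    have h := mul_budgetValue_le_add_dist (v := v) (q := qc.1) (r := r) hqc.le hd
    rw [div_mul_eq_mul_div, le_div_iff₀ hd]
    linarith

end Budget

section Welfare
variable {n : ℕ}

noncomputable def welfare (u : Fin n → Fin n → ℝ) (lam : Fin n → ℝ)
    (x : Fin n → Fin n → ℝ) : ℝ :=
  ∑ i, lam i * dotp (u i) (x i)

lemma abs_welfare_sub_le (u : Fin n → Fin n → ℝ) {x : Fin n → Fin n → ℝ}
    (hx : ∀ k, InSimplexLe (x k)) (lam lam' : Fin n → ℝ) :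
    |welfare u lam x - welfare u lam' x| ≤ (∑ k, ‖u k‖) * dist lam lam' := by
  rw [welfare, welfare, ← sum_sub_distrib, sum_mul]
  refine (abs_sum_le_sum_abs _ _).trans (sum_le_sum fun k _ => ?_)
  rw [← sub_mul, abs_mul, mul_comm (‖u k‖)]
  refine mul_le_mul ?_ (abs_dotp_le_norm (hx k) (u k)) (abs_nonneg _) dist_nonneg
  simpa only [← Real.dist_eq] using dist_le_pi_dist lam lam' k

lemma csSup_image_le_csSup_image_add {α : Type*} {S : Set α} {f g : α → ℝ} {C : ℝ}
    (hS : S.Nonempty) (hg : BddAbove (g '' S)) (h : ∀ x ∈ S, f x ≤ g x + C) :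
    sSup (f '' S) ≤ sSup (g '' S) + C :=
  csSup_le (hS.image f) <| Set.forall_mem_image.2 fun x hx =>
    (h x hx).trans (add_le_add_left (le_csSup hg (Set.mem_image_of_mem g hx)) C)

lemma bddAbove_welfare_image (u : Fin n → Fin n → ℝ) {S : Set (Fin n → Fin n → ℝ)}
    (hrows : ∀ x ∈ S, ∀ k, InSimplexLe (x k)) (lam : Fin n → ℝ) :
    BddAbove (welfare u lam '' S) :=
  ⟨(∑ k, ‖u k‖) * dist lam 0, Set.forall_mem_image.2 fun x hx => by
    simpa [welfare] using (le_abs_self _).trans (abs_welfare_sub_le u (hrows x hx) lam 0)⟩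

lemma lipschitzWith_sSup_welfare (u : Fin n → Fin n → ℝ) {S : Set (Fin n → Fin n → ℝ)}
    (hS : S.Nonempty) (hrows : ∀ x ∈ S, ∀ k, InSimplexLe (x k)) :
    LipschitzWith (∑ k, ‖u k‖₊) (fun lam => sSup (welfare u lam '' S)) := by
  refine LipschitzWith.of_dist_le_mul fun lam lam' => ?_
  set K := (∑ k, ‖u k‖) * dist lam lam'
  have hdiff := fun x hx => abs_le.1 (abs_welfare_sub_le u (hrows x hx) lam lam')
  have h₁ := csSup_image_le_csSup_image_add (f := welfare u lam) (g := welfare u lam') (C := K)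
    hS (bddAbove_welfare_image u hrows lam') fun x hx => by linarith [(hdiff x hx).2]
  have h₂ := csSup_image_le_csSup_image_add (f := welfare u lam') (g := welfare u lam) (C := K)
    hS (bddAbove_welfare_image u hrows lam) fun x hx => by linarith [(hdiff x hx).1]
  rw [Real.dist_eq, abs_le, NNReal.coe_sum]
  simp only [coe_nnnorm]
  constructor <;> linarith

lemma isAlloc_one : IsAlloc (1 : Matrix (Fin n) (Fin n) ℝ) :=
  ⟨fun i j => by rw [Matrix.one_apply]; positivity, fun i => by simp [Matrix.one_apply],
    fun j => by simp [Matrix.one_apply]⟩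

lemma IsAlloc.feasRelax {x : Fin n → Fin n → ℝ} (hx : IsAlloc x) (l : Fin n) :
    FeasRelax l x :=
  ⟨hx.1, fun i => (hx.2.1 i).le, fun j _ => (hx.2.2 j).le, by rw [hx.2.2 l]; norm_num⟩

lemma IsAlloc.inSimplexLe {x : Fin n → Fin n → ℝ} (hx : IsAlloc x) (k : Fin n) :
    InSimplexLe (x k) :=
  ⟨hx.1 k, (hx.2.1 k).le⟩

lemma FeasRelax.inSimplexLe {l : Fin n} {x : Fin n → Fin n → ℝ} (hx : FeasRelax l x)
    (k : Fin n) : InSimplexLe (x k) :=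
  ⟨hx.1 k, hx.2.1 k⟩

lemma setOf_isAlloc_nonempty : {x : Fin n → Fin n → ℝ | IsAlloc x}.Nonempty :=
  ⟨(1 : Matrix (Fin n) (Fin n) ℝ), isAlloc_one⟩

lemma setOf_feasRelax_nonempty (l : Fin n) : {x : Fin n → Fin n → ℝ | FeasRelax l x}.Nonempty :=
  ⟨(1 : Matrix (Fin n) (Fin n) ℝ), isAlloc_one.feasRelax l⟩

lemma continuous_vcg (u : Fin n → Fin n → ℝ) : Continuous (vcg u) :=
  continuous_pi fun l =>
    (lipschitzWith_sSup_welfare u (setOf_feasRelax_nonempty l)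
      fun _ hx => FeasRelax.inSimplexLe hx).continuous.sub
    (lipschitzWith_sSup_welfare u setOf_isAlloc_nonempty
      fun _ hx => IsAlloc.inSimplexLe hx).continuous

lemma vcg_nonneg (u : Fin n → Fin n → ℝ) (lam : Fin n → ℝ) (l : Fin n) : 0 ≤ vcg u lam l :=
  sub_nonneg.2 <| csSup_le_csSup
    (bddAbove_welfare_image u (fun _ hx => FeasRelax.inSimplexLe hx) lam)
    (setOf_isAlloc_nonempty.image _) (Set.image_mono fun _ hx => IsAlloc.feasRelax hx l)

end Welfare

lemma dotp_pos {n : ℕ} {p ω : Fin n → ℝ} (hp : ∀ j, 0 ≤ p j) (hp0 : p ≠ 0)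
    (hω : ∀ j, 0 < ω j) : 0 < dotp p ω := by
  obtain ⟨l, hl⟩ := Function.ne_iff.1 hp0
  exact sum_pos' (fun j _ => mul_nonneg (hp j) (hω j).le)
    ⟨l, mem_univ l, mul_pos ((hp l).lt_of_ne' hl) (hω l)⟩

lemma optVal_eq_budgetValue {n : ℕ} (u : Fin n → Fin n → ℝ) (i : Fin n) (ωi lam : Fin n → ℝ)
    (a : ℝ) :
    optVal u i ωi lam a = budgetValue (u i) (vcg u lam) (dotp (vcg u lam) ωi + a) := by
  rw [optVal, budgetValue, Set.image]
  congr 1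
  ext v
  simp only [budgetSet, Set.mem_ofPred_eq, and_assoc, eq_comm]

theorem opt_utility_continuous_general {n : ℕ} (u : Fin n → Fin n → ℝ)
    (i : Fin n) (ωi : Fin n → ℝ) (hωi : ∀ j, 0 < ωi j ∧ ωi j ≤ 1)
    (lamSeq : ℕ → Fin n → ℝ) (lamLim : Fin n → ℝ)
    (aSeq : ℕ → ℝ) (aLim : ℝ)
    (haLim : 0 ≤ aLim)
    (hlam : Filter.Tendsto lamSeq Filter.atTop (nhds lamLim))
    (ha : Filter.Tendsto aSeq Filter.atTop (nhds aLim))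
    (hp : vcg u lamLim ≠ 0) :
    Filter.Tendsto (fun t => optVal u i ωi (lamSeq t) (aSeq t))
      Filter.atTop (nhds (optVal u i ωi lamLim aLim)) := by
  have hprice : Tendsto (fun t => vcg u (lamSeq t)) atTop (𝓝 (vcg u lamLim)) :=
    ((continuous_vcg u).tendsto lamLim).comp hlam
  have hincome : Tendsto (fun t => dotp (vcg u (lamSeq t)) ωi + aSeq t) atTop
      (𝓝 (dotp (vcg u lamLim) ωi + aLim)) :=
    (((continuous_id.dotProduct continuous_const).tendsto _).comp hprice).add ha
  have hincome_pos : 0 < dotp (vcg u lamLim) ωi + aLim :=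
    add_pos_of_pos_of_nonneg (dotp_pos (vcg_nonneg u lamLim) hp fun j => (hωi j).1) haLim
  simp only [optVal_eq_budgetValue]
  exact ((continuousAt_budgetValue (u i) hincome_pos).tendsto.comp
    (hprice.prodMk_nhds hincome) :)

/-- continuity of the optimal budget-constrained utility, provided
agent `i` has a strictly positive endowment and the limit prices are nonzero. -/
theorem opt_utility_continuous {n : ℕ} (hn : 0 < n) (u : Fin n → Fin n → ℝ)
    (hu : ∀ i j, 0 ≤ u i j)
    (i : Fin n) (ωi : Fin n → ℝ) (hωi : ∀ j, 0 < ωi j ∧ ωi j ≤ 1)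
    (lamSeq : ℕ → Fin n → ℝ) (lamLim : Fin n → ℝ)
    (aSeq : ℕ → ℝ) (aLim : ℝ)
    (hlamSeq : ∀ t i', 0 ≤ lamSeq t i') (hlamLim : ∀ i', 0 ≤ lamLim i')
    (haSeq : ∀ t, 0 ≤ aSeq t) (haLim : 0 ≤ aLim)
    (hlam : Filter.Tendsto lamSeq Filter.atTop (nhds lamLim))
    (ha : Filter.Tendsto aSeq Filter.atTop (nhds aLim))
    (hp : vcg u lamLim ≠ 0) :
    Filter.Tendsto (fun t => optVal u i ωi (lamSeq t) (aSeq t))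
      Filter.atTop (nhds (optVal u i ωi lamLim aLim)) :=
  opt_utility_continuous_general u i ωi hωi lamSeq lamLim aSeq aLim haLim hlam ha hp
end
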